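/- arXiv:math/0007192 — 3 statements merged into one kernel-verified Lean document; each statement's English description precedes it below -/
import Mathlib

section
/- Let 𝔥 ⊆ sp(V,ω) be the Lie subalgebra of elements preserving both V1 and V2. Then the quotient sp(V,ω)/𝔥, regarded as a module over 𝔥 via the adjoint action, is a nonzero irreducible 𝔥-module (it has no Lie submodules other than 0 and itself). -/
/-!
Write `u ⊙ w` for the endomorphism `x ↦ ω w x • u + ω u x • w` (`symProd`). It lies in
`sp(V, ω)`, and `⁅f, u ⊙ w⁆ = f u ⊙ w + u ⊙ f w` for `f ∈ sp(V, ω)`. Modulo `𝔥`, `sp(V, ω)` is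
spanned by the `u ⊙ w` with `u ∈ V1`, `w ∈ V2`: an off-diagonal `g` equals `∑ᵢ g eᵢ ⊙ dᵢ` for a
basis `e` of `V1` and its `ω`-dual basis `d`. If `W ⊋ 𝔥` is `𝔥`-stable, it contains a nonzero
off-diagonal `m`, and for `a ∈ V1` with `m a ≠ 0` it contains `⁅a ⊙ a, m⁆ = -2 • a ⊙ m a`. The
elements `w ⊙ w'` (`w, w' ∈ V2`) and `u ⊙ u'` (`u, u' ∈ V1`) of `𝔥` act on `a ⊙ b` through one
factor only, and `V2`, `V1` are irreducible under them, so `W` contains every `u ⊙ w`.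
-/

open LinearMap (BilinForm)

namespace LinearMap.BilinForm

variable {K V : Type*} [Field K] [AddCommGroup V] [Module K V] {ω : BilinForm K V}

lemma skewAdjoint_apply {f : Module.End K V} (hf : f ∈ skewAdjointLieSubalgebra ω) (x y : V) :
    ω (f x) y = -ω x (f y) := by
  simpa using hf x y

noncomputable def symProd (ω : BilinForm K V) : V →ₗ[K] V →ₗ[K] Module.End K V :=
  LinearMap.mk₂ K (fun u w => (ω w).smulRight u + (ω u).smulRight w)
    (fun _ _ _ => by ext; simp; module) (fun _ _ _ => by ext; simp; module)
    (fun _ _ _ => by ext; simp; module) (fun _ _ _ => by ext; simp; module)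

@[simp]
lemma symProd_apply (u w x : V) : ω.symProd u w x = ω w x • u + ω u x • w := rfl

lemma symProd_comm (u w : V) : ω.symProd u w = ω.symProd w u := by
  ext x
  simp [add_comm]

lemma symProd_apply_eq_zero {u w x : V} (hu : ω u x = 0) (hw : ω w x = 0) :
    ω.symProd u w x = 0 := by
  simp [hu, hw]

lemma symProd_mem_skewAdjointLieSubalgebra (hAlt : ω.IsAlt) (u w : V) :
    ω.symProd u w ∈ skewAdjointLieSubalgebra ω := by
  intro x y
  simp only [symProd_apply, LinearMap.neg_apply, map_add, map_smul, LinearMap.add_apply,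
    LinearMap.smul_apply, smul_eq_mul, ← hAlt.neg_eq x]
  ring

lemma lie_symProd {f : Module.End K V} (hf : f ∈ skewAdjointLieSubalgebra ω) (u w : V) :
    ⁅f, ω.symProd u w⁆ = ω.symProd (f u) w + ω.symProd u (f w) := by
  ext x
  simp only [Ring.lie_def, LinearMap.sub_apply, Module.End.mul_apply, symProd_apply,
    LinearMap.add_apply, map_add, map_smul, skewAdjoint_apply hf]
  module

lemma symProd_mapsTo {P Q : Submodule K V} (hPQ : ∀ x ∈ P, ∀ y ∈ Q, ω x y = 0) {u w : V}
    (hu : u ∈ P) (hw : w ∈ P) :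
    Set.MapsTo (ω.symProd u w) P P ∧ Set.MapsTo (ω.symProd u w) Q Q := by
  refine ⟨fun x _ => ?_, fun x hx => ?_⟩
  · rw [symProd_apply]
    exact add_mem (P.smul_mem _ hu) (P.smul_mem _ hw)
  · rw [SetLike.mem_coe, symProd_apply_eq_zero (hPQ u hu x hx) (hPQ w hw x hx)]
    exact Q.zero_mem

lemma exists_restrict_apply_ne_zero {P : Submodule K V} (hP : (ω.restrict P).Nondegenerate)
    {a : V} (haP : a ∈ P) (ha : a ≠ 0) : ∃ u ∈ P, ω u a ≠ 0 := by
  by_contra! h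
  exact ha (congrArg Subtype.val (hP.2 ⟨a, haP⟩ fun u => h u u.2))

lemma le_of_forall_symProd_apply_mem [NeZero (2 : K)] {P U : Submodule K V}
    (hP : (ω.restrict P).Nondegenerate) {a : V} (haP : a ∈ P) (ha : a ≠ 0)
    (hU : ∀ u ∈ P, ∀ u' ∈ P, ω.symProd u u' a ∈ U) : P ≤ U := by
  obtain ⟨v, hvP, hva⟩ := exists_restrict_apply_ne_zero hP haP ha
  have hvU : v ∈ U := by
    have h := hU v hvP v hvP
    rwa [symProd_apply, ← two_smul K, smul_smul,
      Submodule.smul_mem_iff _ (mul_ne_zero two_ne_zero hva)] at h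
  intro u hu
  have h := sub_mem (hU u hu v hvP) (U.smul_mem (ω u a) hvU)
  rwa [symProd_apply, add_sub_cancel_right, Submodule.smul_mem_iff _ hva] at h

variable {V1 V2 : Submodule K V}

lemma isAdjointPair_projection (hω : ω.IsRefl) (hcompl : IsCompl V1 V2)
    (horth : ∀ x ∈ V1, ∀ y ∈ V2, ω x y = 0) :
    IsAdjointPair ω ω (V1.projection V2 hcompl) (V1.projection V2 hcompl) := by
  intro x y
  set p := V1.projection V2 hcompl
  set q := V2.projection V1 hcompl.symm
  calc ω (p x) y = ω (p x) (p y + q y) := by rw [Submodule.projection_add_projection_eq_self]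
    _ = ω (p x) (p y) := by
      rw [map_add, horth _ (V1.projection_apply_mem ..) _ (V2.projection_apply_mem ..), add_zero]
    _ = ω (p x + q x) (p y) := by
      rw [map_add, LinearMap.add_apply,
        hω _ _ (horth _ (V1.projection_apply_mem ..) _ (V2.projection_apply_mem ..)), add_zero]
    _ = ω x (p y) := by rw [Submodule.projection_add_projection_eq_self]

lemma exists_blockDiagonal_part (hAlt : ω.IsAlt) (hcompl : IsCompl V1 V2)
    (horth : ∀ x ∈ V1, ∀ y ∈ V2, ω x y = 0) {f : Module.End K V}
    (hf : f ∈ skewAdjointLieSubalgebra ω) :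
    ∃ d ∈ skewAdjointLieSubalgebra ω, Set.MapsTo d V1 V1 ∧ Set.MapsTo d V2 V2 ∧
      Set.MapsTo (f - d) V1 V2 ∧ Set.MapsTo (f - d) V2 V1 := by
  set p := V1.projection V2 hcompl
  set q := V2.projection V1 hcompl.symm
  have hp : IsAdjointPair ω ω p p := isAdjointPair_projection hAlt.isRefl hcompl horth
  have hq : IsAdjointPair ω ω q q := isAdjointPair_projection hAlt.isRefl hcompl.symm
    fun y hy x hx => hAlt.isRefl _ _ (horth x hx y hy)
  refine ⟨p * f * p + q * f * q, ?_, fun x hx => ?_, fun x hx => ?_, fun x hx => ?_,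
    fun x hx => ?_⟩
  · intro x y
    simp only [LinearMap.add_apply, Module.End.mul_apply, LinearMap.neg_apply, map_add,
      hp _ y, hq _ y, skewAdjoint_apply hf, hp x, hq x]
  · simp [Module.End.mul_apply, p, q, Submodule.projection_apply_of_mem_left hcompl hx,
      Submodule.projection_apply_of_mem_right hcompl.symm hx]
  · simp [Module.End.mul_apply, p, q, Submodule.projection_apply_of_mem_left hcompl.symm hx,
      Submodule.projection_apply_of_mem_right hcompl hx]
  · simp [Module.End.mul_apply, p, q, Submodule.projection_apply_of_mem_left hcompl hx,
      Submodule.projection_apply_of_mem_right hcompl.symm hx,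
      ← Submodule.projection_eq_self_sub_projection]
  · simp [Module.End.mul_apply, p, q, Submodule.projection_apply_of_mem_left hcompl.symm hx,
      Submodule.projection_apply_of_mem_right hcompl hx,
      ← Submodule.projection_eq_self_sub_projection]

lemma eq_sum_symProd_of_mapsTo (hAlt : ω.IsAlt) (hcompl : IsCompl V1 V2)
    (horth : ∀ x ∈ V1, ∀ y ∈ V2, ω x y = 0) (hNd1 : (ω.restrict V1).Nondegenerate)
    {ι : Type*} [Fintype ι] [DecidableEq ι] (e : Module.Basis ι K V1) {g : Module.End K V}
    (hg : g ∈ skewAdjointLieSubalgebra ω) (h12 : Set.MapsTo g V1 V2) (h21 : Set.MapsTo g V2 V1) :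
    g = ∑ i, ω.symProd (g (e i)) ((ω.restrict V1).dualBasis hNd1 e i) := by
  have he : ∀ x i, e.repr x i = ω ((ω.restrict V1).dualBasis hNd1 e i) x := fun x i => by
    have h := dualBasis_repr_apply hNd1.flip ((ω.restrict V1).dualBasis hNd1 e) x i
    rwa [dualBasis_flip_dualBasis] at h
  set d := (ω.restrict V1).dualBasis hNd1 e
  have hd : ∀ x i, d.repr x i = ω x (e i) := fun x i => dualBasis_repr_apply hNd1 e x i
  refine LinearMap.ext_on_codisjoint hcompl.codisjoint (fun x hx => ?_) (fun y hy => ?_)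
  · have hx' : x = ∑ i, ω (d i) x • (e i : V) := by
      simpa [he] using congrArg Subtype.val (e.sum_repr ⟨x, hx⟩).symm
    conv_lhs => rw [hx']
    simp [LinearMap.sum_apply, hAlt.isRefl _ _ (horth _ hx _ (h12 (e _).2))]
  · have hy' : g y = ∑ i, ω (g y) (e i) • (d i : V) := by
      simpa [hd] using congrArg Subtype.val (d.sum_repr ⟨g y, h21 hy⟩).symm
    rw [hy']
    simp only [LinearMap.sum_apply, symProd_apply, horth _ (d _).2 _ hy, zero_smul, zero_add]
    exact Finset.sum_congr rfl fun i _ => by rw [skewAdjoint_apply hg, hAlt.neg_eq]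

lemma mem_span_symProd_of_mapsTo [FiniteDimensional K V1] (hAlt : ω.IsAlt)
    (hcompl : IsCompl V1 V2) (horth : ∀ x ∈ V1, ∀ y ∈ V2, ω x y = 0)
    (hNd1 : (ω.restrict V1).Nondegenerate) {g : Module.End K V}
    (hg : g ∈ skewAdjointLieSubalgebra ω) (h12 : Set.MapsTo g V1 V2) (h21 : Set.MapsTo g V2 V1) :
    g ∈ Submodule.span K (Set.image2 (fun u w => ω.symProd u w) V1 V2) := by
  classical
  rw [eq_sum_symProd_of_mapsTo hAlt hcompl horth hNd1 (Module.finBasis K V1) hg h12 h21]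
  refine Submodule.sum_mem _ fun i _ => Submodule.subset_span ?_
  rw [symProd_comm]
  exact Set.mem_image2_of_mem (Subtype.prop _) (h12 (Subtype.prop _))

lemma exists_apply_ne_zero_of_mapsTo [FiniteDimensional K V1] (hAlt : ω.IsAlt)
    (hcompl : IsCompl V1 V2) (horth : ∀ x ∈ V1, ∀ y ∈ V2, ω x y = 0)
    (hNd1 : (ω.restrict V1).Nondegenerate) {g : Module.End K V}
    (hg : g ∈ skewAdjointLieSubalgebra ω) (h12 : Set.MapsTo g V1 V2) (h21 : Set.MapsTo g V2 V1)
    (hg0 : g ≠ 0) : ∃ a ∈ V1, g a ≠ 0 := by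
  classical
  by_contra! h
  refine hg0 ?_
  rw [eq_sum_symProd_of_mapsTo hAlt hcompl horth hNd1 (Module.finBasis K V1) hg h12 h21]
  simp [h _ (Subtype.prop _)]

lemma symProd_self_apply_mem_of_lie_mem [NeZero (2 : K)] (hAlt : ω.IsAlt)
    (horth : ∀ x ∈ V1, ∀ y ∈ V2, ω x y = 0) {W : Submodule K (Module.End K V)}
    (hW : ∀ h ∈ skewAdjointLieSubalgebra ω, Set.MapsTo h V1 V1 → Set.MapsTo h V2 V2 →
      ∀ f ∈ W, ⁅h, f⁆ ∈ W)
    {m : Module.End K V} (hm : m ∈ skewAdjointLieSubalgebra ω) (hmW : m ∈ W)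
    {a : V} (ha : a ∈ V1) : ω.symProd a (m a) ∈ W := by
  have h := hW _ (symProd_mem_skewAdjointLieSubalgebra hAlt a a) (symProd_mapsTo horth ha ha).1
    (symProd_mapsTo horth ha ha).2 m hmW
  rwa [Ring.lie_def, ← neg_sub, ← Ring.lie_def, lie_symProd hm, symProd_comm (m a), ← two_smul K,
    neg_mem_iff, Submodule.smul_mem_iff _ two_ne_zero] at h

lemma symProd_mem_of_symProd_mem [NeZero (2 : K)] (hAlt : ω.IsAlt)
    (horth : ∀ x ∈ V1, ∀ y ∈ V2, ω x y = 0) (hNd1 : (ω.restrict V1).Nondegenerate)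
    (hNd2 : (ω.restrict V2).Nondegenerate) {W : Submodule K (Module.End K V)}
    (hW : ∀ h ∈ skewAdjointLieSubalgebra ω, Set.MapsTo h V1 V1 → Set.MapsTo h V2 V2 →
      ∀ f ∈ W, ⁅h, f⁆ ∈ W)
    {a b : V} (ha : a ∈ V1) (ha0 : a ≠ 0) (hb : b ∈ V2) (hb0 : b ≠ 0)
    (hab : ω.symProd a b ∈ W) : ∀ u ∈ V1, ∀ w ∈ V2, ω.symProd u w ∈ W := by
  have horth' : ∀ x ∈ V2, ∀ y ∈ V1, ω x y = 0 := fun x hx y hy =>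
    hAlt.isRefl _ _ (horth y hy x hx)
  have hV2 : V2 ≤ W.comap (ω.symProd a) := by
    refine le_of_forall_symProd_apply_mem hNd2 hb hb0 fun w hw w' hw' => ?_
    have h := hW _ (symProd_mem_skewAdjointLieSubalgebra hAlt w w')
      (symProd_mapsTo horth' hw hw').2 (symProd_mapsTo horth' hw hw').1 _ hab
    rwa [lie_symProd (symProd_mem_skewAdjointLieSubalgebra hAlt w w'),
      symProd_apply_eq_zero (horth' w hw a ha) (horth' w' hw' a ha), map_zero,
      LinearMap.zero_apply, zero_add] at h
  intro u hu w hw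
  refine le_of_forall_symProd_apply_mem (U := W.comap (ω.symProd.flip w)) hNd1 ha ha0
    (fun v hv v' hv' => ?_) hu
  have h := hW _ (symProd_mem_skewAdjointLieSubalgebra hAlt v v')
    (symProd_mapsTo horth hv hv').1 (symProd_mapsTo horth hv hv').2 _ (hV2 hw)
  rwa [lie_symProd (symProd_mem_skewAdjointLieSubalgebra hAlt v v'),
    symProd_apply_eq_zero (horth v hv w hw) (horth v' hv' w hw), map_zero, add_zero] at h

lemma exists_mem_skewAdjointLieSubalgebra_not_mapsTo (hAlt : ω.IsAlt) (hcompl : IsCompl V1 V2)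
    (horth : ∀ x ∈ V1, ∀ y ∈ V2, ω x y = 0) (hNd2 : (ω.restrict V2).Nondegenerate)
    (h1 : V1 ≠ ⊥) (h2 : V2 ≠ ⊥) :
    ∃ f : Module.End K V, f ∈ skewAdjointLieSubalgebra ω ∧
      ¬ (Set.MapsTo f V1 V1 ∧ Set.MapsTo f V2 V2) := by
  obtain ⟨u, hu, hu0⟩ := Submodule.exists_mem_ne_zero_of_ne_bot h1
  obtain ⟨w, hw, hw0⟩ := Submodule.exists_mem_ne_zero_of_ne_bot h2
  obtain ⟨x, hx, hxw⟩ := exists_restrict_apply_ne_zero hNd2 hw hw0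
  refine ⟨ω.symProd u w, symProd_mem_skewAdjointLieSubalgebra hAlt u w, fun hmaps => ?_⟩
  have hux : ω.symProd u w x = ω w x • u := by simp [horth u hu x hx]
  have h0 : ω w x • u = 0 :=
    Submodule.disjoint_def.1 hcompl.disjoint _ (V1.smul_mem _ hu) (hux ▸ hmaps.2 hx)
  rw [← hAlt.neg_eq] at h0
  exact (smul_ne_zero (neg_ne_zero.2 hxw) hu0) h0

end LinearMap.BilinForm

open LinearMap.BilinForm

theorem sp_quotient_by_block_diagonal_is_irreducible_general
    {K : Type*} [Field K] [CharZero K]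
    {V : Type*} [AddCommGroup V] [Module K V] [FiniteDimensional K V]
    (ω : LinearMap.BilinForm K V) (hAlt : ω.IsAlt)
    (V1 V2 : Submodule K V) (h1 : V1 ≠ ⊥) (h2 : V2 ≠ ⊥) (hcompl : IsCompl V1 V2)
    (horth : ∀ x ∈ V1, ∀ y ∈ V2, ω x y = 0)
    (hNd1 : (ω.restrict V1).Nondegenerate) (hNd2 : (ω.restrict V2).Nondegenerate) :
    -- the quotient `sp/𝔥` is nonzero:
    (∃ f : Module.End K V, f ∈ skewAdjointLieSubalgebra ω ∧
        ¬ ((∀ x ∈ V1, f x ∈ V1) ∧ (∀ x ∈ V2, f x ∈ V2))) ∧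
    -- and it is irreducible as an `𝔥`-module:
    ∀ W : Submodule K (Module.End K V),
      (∀ f ∈ W, f ∈ skewAdjointLieSubalgebra ω) →
      (∀ f ∈ skewAdjointLieSubalgebra ω,
        (∀ x ∈ V1, f x ∈ V1) → (∀ x ∈ V2, f x ∈ V2) → f ∈ W) →
      (∀ h ∈ skewAdjointLieSubalgebra ω, (∀ x ∈ V1, h x ∈ V1) → (∀ x ∈ V2, h x ∈ V2) →
        ∀ f ∈ W, ⁅h, f⁆ ∈ W) →
      ((∀ f, f ∈ W ↔ f ∈ skewAdjointLieSubalgebra ω ∧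
            (∀ x ∈ V1, f x ∈ V1) ∧ (∀ x ∈ V2, f x ∈ V2)) ∨
       (∀ f, f ∈ W ↔ f ∈ skewAdjointLieSubalgebra ω)) := by
  refine ⟨exists_mem_skewAdjointLieSubalgebra_not_mapsTo hAlt hcompl horth hNd2 h1 h2,
    fun W hWsp h𝔥W hW => ?_⟩
  by_cases hdiag : ∀ f ∈ W, (∀ x ∈ V1, f x ∈ V1) ∧ (∀ x ∈ V2, f x ∈ V2)
  · exact Or.inl fun f =>
      ⟨fun hf => ⟨hWsp f hf, hdiag f hf⟩, fun ⟨hf, hf1, hf2⟩ => h𝔥W f hf hf1 hf2⟩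
  obtain ⟨f, hfW, hf⟩ := not_forall₂.1 hdiag
  obtain ⟨d, hd, hd1, hd2, hm12, hm21⟩ :=
    exists_blockDiagonal_part hAlt hcompl horth (hWsp f hfW)
  have hmW : f - d ∈ W := sub_mem hfW (h𝔥W d hd hd1 hd2)
  have hm0 : f - d ≠ 0 := fun h => hf (sub_eq_zero.1 h ▸ ⟨hd1, hd2⟩)
  obtain ⟨a, ha, hma⟩ :=
    exists_apply_ne_zero_of_mapsTo hAlt hcompl horth hNd1 (hWsp _ hmW) hm12 hm21 hm0
  have hV1V2 := symProd_mem_of_symProd_mem hAlt horth hNd1 hNd2 hW ha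
    (fun h => hma (by rw [h, map_zero])) (hm12 ha) hma
    (symProd_self_apply_mem_of_lie_mem hAlt horth hW (hWsp _ hmW) hmW ha)
  refine Or.inr fun g => ⟨hWsp g, fun hg => ?_⟩
  obtain ⟨e, he, he1, he2, hg12, hg21⟩ := exists_blockDiagonal_part hAlt hcompl horth hg
  rw [← add_sub_cancel e g]
  refine add_mem (h𝔥W e he he1 he2) (Submodule.span_le.2 ?_
    (mem_span_symProd_of_mapsTo hAlt hcompl horth hNd1 (sub_mem hg he) hg12 hg21))
  rintro _ ⟨u, hu, w, hw, rfl⟩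
  exact hV1V2 u hu w hw

theorem sp_quotient_by_block_diagonal_is_irreducible
    {K : Type*} [Field K] [CharZero K]
    {V : Type*} [AddCommGroup V] [Module K V] [FiniteDimensional K V]
    (ω : LinearMap.BilinForm K V) (hAlt : ω.IsAlt) (hNd : ω.Nondegenerate)
    (V1 V2 : Submodule K V) (h1 : V1 ≠ ⊥) (h2 : V2 ≠ ⊥) (hcompl : IsCompl V1 V2)
    (horth : ∀ x ∈ V1, ∀ y ∈ V2, ω x y = 0)
    (hNd1 : (ω.restrict V1).Nondegenerate) (hNd2 : (ω.restrict V2).Nondegenerate) :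
    -- the quotient `sp/𝔥` is nonzero:
    (∃ f : Module.End K V, f ∈ skewAdjointLieSubalgebra ω ∧
        ¬ ((∀ x ∈ V1, f x ∈ V1) ∧ (∀ x ∈ V2, f x ∈ V2))) ∧
    -- and it is irreducible as an `𝔥`-module:
    ∀ W : Submodule K (Module.End K V),
      (∀ f ∈ W, f ∈ skewAdjointLieSubalgebra ω) →
      (∀ f ∈ skewAdjointLieSubalgebra ω,
        (∀ x ∈ V1, f x ∈ V1) → (∀ x ∈ V2, f x ∈ V2) → f ∈ W) →
      (∀ h ∈ skewAdjointLieSubalgebra ω, (∀ x ∈ V1, h x ∈ V1) → (∀ x ∈ V2, h x ∈ V2) →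
        ∀ f ∈ W, ⁅h, f⁆ ∈ W) →
      ((∀ f, f ∈ W ↔ f ∈ skewAdjointLieSubalgebra ω ∧
            (∀ x ∈ V1, f x ∈ V1) ∧ (∀ x ∈ V2, f x ∈ V2)) ∨
       (∀ f, f ∈ W ↔ f ∈ skewAdjointLieSubalgebra ω)) :=
  sp_quotient_by_block_diagonal_is_irreducible_general ω hAlt V1 V2 h1 h2 hcompl horth hNd1 hNd2
end

section
/- Let W be a K-linear subspace of V such that g(W) ⊆ W for every K-linear automorphism g of V that preserves ω (i.e. ω(g x, g y) = ω(x, y) for all x, y) and satisfies g(V1) = V1 and g(V2) = V2. Then W is one of the four subspaces 0, V1, V2, or V. -/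
/-!
A subspace `W` stable under the symplectic transvections `x ↦ x + ω x v • v` along a subspace
`A` on which `ω` is nondegenerate either contains `A` or is `ω`-orthogonal to it: if `ω w v ≠ 0`
for some `w ∈ W` and `v ∈ A`, applying the transvection along `x ∈ A` to `w` puts `x` in `W`
whenever `ω w x ≠ 0`, and otherwise `v + x` and `v` lie in `W`. Transvections along `V₁` fix
`V₂` pointwise and vice versa, so they lie in `Sp(V₁) × Sp(V₂)`. Hence `W` contains `V₁` or
lies in `V₁^⊥ = V₂`, and contains `V₂` or lies in `V₁`; the four combinations give `⊤`, `V₁`,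
`V₂` and `⊥`.
-/

theorem IsCompl.eq_bot_or_eq_left_or_eq_right_or_eq_top {α : Type*} [Lattice α] [BoundedOrder α]
    {a b x : α} (hab : IsCompl a b) (ha : a ≤ x ∨ x ≤ b) (hb : b ≤ x ∨ x ≤ a) :
    x = ⊥ ∨ x = a ∨ x = b ∨ x = ⊤ := by
  rcases ha with hax | hxb <;> rcases hb with hbx | hxa
  · exact .inr <| .inr <| .inr <| top_le_iff.1 (hab.sup_eq_top ▸ sup_le hax hbx)
  · exact .inr <| .inl <| le_antisymm hxa hax
  · exact .inr <| .inr <| .inl <| le_antisymm hxb hbx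
  · exact .inl <| le_bot_iff.1 (hab.inf_eq_bot ▸ le_inf hxa hxb)

namespace LinearMap.BilinForm

section CommRing

variable {K V : Type*} [CommRing K] [AddCommGroup V] [Module K V] {ω : LinearMap.BilinForm K V}

def symplecticTransvection (hAlt : ω.IsAlt) (v : V) : V ≃ₗ[K] V :=
  LinearEquiv.transvection (f := ω.flip v) (hAlt v)

theorem symplecticTransvection_apply (hAlt : ω.IsAlt) (v x : V) :
    symplecticTransvection hAlt v x = x + ω x v • v :=
  rfl

theorem apply_symplecticTransvection (hAlt : ω.IsAlt) (v x y : V) :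
    ω (symplecticTransvection hAlt v x) (symplecticTransvection hAlt v y) = ω x y := by
  simp only [symplecticTransvection_apply, map_add, map_smul, LinearMap.add_apply,
    LinearMap.smul_apply, smul_eq_mul, hAlt v, ← hAlt.neg_eq y v]
  ring

theorem map_symplecticTransvection_of_mem (hAlt : ω.IsAlt) {A : Submodule K V} {v : V}
    (hv : v ∈ A) : A.map (symplecticTransvection hAlt v : V →ₗ[K] V) = A := by
  refine le_antisymm (Submodule.map_le_iff_le_comap.2 fun x hx => ?_) fun x hx => ?_
  · exact A.add_mem hx (A.smul_mem _ hv)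
  · refine ⟨x - ω x v • v, A.sub_mem hx (A.smul_mem _ hv), ?_⟩
    simp [symplecticTransvection_apply, hAlt v]

theorem map_symplecticTransvection_of_forall_apply_eq_zero (hAlt : ω.IsAlt) {B : Submodule K V}
    {v : V} (hB : ∀ x ∈ B, ω x v = 0) :
    B.map (symplecticTransvection hAlt v : V →ₗ[K] V) = B := by
  have hfix : ∀ x ∈ B, symplecticTransvection hAlt v x = x := fun x hx => by
    rw [symplecticTransvection_apply, hB x hx, zero_smul, add_zero]
  refine le_antisymm (Submodule.map_le_iff_le_comap.2 fun x hx => ?_) fun x hx => ⟨x, hx, hfix x hx⟩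
  rw [Submodule.mem_comap, LinearEquiv.coe_coe, hfix x hx]
  exact hx

theorem mem_of_forall_apply_eq_zero_of_isCompl {A B : Submodule K V} (hAB : IsCompl A B)
    (hBA : ∀ x ∈ B, ∀ y ∈ A, ω x y = 0) (hA : (ω.restrict A).SeparatingLeft) {w : V}
    (hw : ∀ v ∈ A, ω w v = 0) : w ∈ B := by
  obtain ⟨a, ha, b, hb, rfl⟩ := Submodule.mem_sup.1 (hAB.sup_eq_top ▸ Submodule.mem_top : w ∈ A ⊔ B)
  have ha0 : a = 0 := congrArg Subtype.val <| hA ⟨a, ha⟩ fun v => by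
    simpa [hBA b hb v v.2] using hw v v.2
  simpa [ha0] using hb

end CommRing

section Field

variable {K V : Type*} [Field K] [AddCommGroup V] [Module K V] {ω : LinearMap.BilinForm K V}
  {A B W : Submodule K V}

theorem le_of_add_smul_mem_of_apply_ne_zero (hW : ∀ v ∈ A, ∀ x ∈ W, x + ω x v • v ∈ W)
    {w v : V} (hw : w ∈ W) (hv : v ∈ A) (hwv : ω w v ≠ 0) : A ≤ W := by
  have mem_of_ne : ∀ x ∈ A, ω w x ≠ 0 → x ∈ W := fun x hx hwx => by
    have h : ω w x • x ∈ W := by simpa using W.sub_mem (hW x hx w hw) hw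
    simpa [smul_smul, inv_mul_cancel₀ hwx] using W.smul_mem (ω w x)⁻¹ h
  intro x hx
  by_cases hwx : ω w x = 0
  · have hvx : v + x ∈ W := mem_of_ne _ (A.add_mem hv hx) (by simpa [hwx] using hwv)
    simpa using W.sub_mem hvx (mem_of_ne v hv hwv)
  · exact mem_of_ne x hx hwx

theorem le_or_le_of_add_smul_mem (hW : ∀ v ∈ A, ∀ x ∈ W, x + ω x v • v ∈ W)
    (hAB : IsCompl A B) (hBA : ∀ x ∈ B, ∀ y ∈ A, ω x y = 0)
    (hA : (ω.restrict A).SeparatingLeft) : A ≤ W ∨ W ≤ B := by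
  refine or_iff_not_imp_right.2 fun hWB => ?_
  obtain ⟨w, hw, hwB⟩ := Set.not_subset.1 hWB
  obtain ⟨v, hv, hwv⟩ : ∃ v ∈ A, ω w v ≠ 0 := by
    by_contra! h
    exact hwB (mem_of_forall_apply_eq_zero_of_isCompl hAB hBA hA h)
  exact le_of_add_smul_mem_of_apply_ne_zero hW hw hv hwv

end Field

end LinearMap.BilinForm

open LinearMap.BilinForm in
theorem invariant_subspaces_of_product_symplectic_group_general
    {K : Type*} [Field K]
    {V : Type*} [AddCommGroup V] [Module K V]
    (ω : LinearMap.BilinForm K V) (hAlt : ω.IsAlt)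
    (V1 V2 : Submodule K V) (hcompl : IsCompl V1 V2)
    (horth : ∀ x ∈ V1, ∀ y ∈ V2, ω x y = 0)
    (hNd1 : (ω.restrict V1).Nondegenerate) (hNd2 : (ω.restrict V2).Nondegenerate)
    (W : Submodule K V)
    (hW : ∀ g : V ≃ₗ[K] V,
      (∀ x y, ω (g x) (g y) = ω x y) →
      Submodule.map (g : V →ₗ[K] V) V1 = V1 →
      Submodule.map (g : V →ₗ[K] V) V2 = V2 →
      ∀ x ∈ W, g x ∈ W) :
    W = ⊥ ∨ W = V1 ∨ W = V2 ∨ W = ⊤ := by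
  have horth' : ∀ x ∈ V2, ∀ y ∈ V1, ω x y = 0 := fun x hx y hy =>
    hAlt.isRefl _ _ (horth y hy x hx)
  have hW1 : ∀ v ∈ V1, ∀ x ∈ W, x + ω x v • v ∈ W := fun v hv =>
    hW _ (apply_symplecticTransvection hAlt v) (map_symplecticTransvection_of_mem hAlt hv)
      (map_symplecticTransvection_of_forall_apply_eq_zero hAlt fun x hx => horth' x hx v hv)
  have hW2 : ∀ v ∈ V2, ∀ x ∈ W, x + ω x v • v ∈ W := fun v hv =>
    hW _ (apply_symplecticTransvection hAlt v)
      (map_symplecticTransvection_of_forall_apply_eq_zero hAlt fun x hx => horth x hx v hv)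
      (map_symplecticTransvection_of_mem hAlt hv)
  exact hcompl.eq_bot_or_eq_left_or_eq_right_or_eq_top
    (le_or_le_of_add_smul_mem hW1 hcompl horth' hNd1.1)
    (le_or_le_of_add_smul_mem hW2 hcompl.symm horth hNd2.1)

theorem invariant_subspaces_of_product_symplectic_group
    {K : Type*} [Field K] [CharZero K]
    {V : Type*} [AddCommGroup V] [Module K V] [FiniteDimensional K V]
    (ω : LinearMap.BilinForm K V) (hAlt : ω.IsAlt) (hNd : ω.Nondegenerate)
    (V1 V2 : Submodule K V) (h1 : V1 ≠ ⊥) (h2 : V2 ≠ ⊥) (hcompl : IsCompl V1 V2)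
    (horth : ∀ x ∈ V1, ∀ y ∈ V2, ω x y = 0)
    (hNd1 : (ω.restrict V1).Nondegenerate) (hNd2 : (ω.restrict V2).Nondegenerate)
    (W : Submodule K V)
    (hW : ∀ g : V ≃ₗ[K] V,
      (∀ x y, ω (g x) (g y) = ω x y) →
      Submodule.map (g : V →ₗ[K] V) V1 = V1 →
      Submodule.map (g : V →ₗ[K] V) V2 = V2 →
      ∀ x ∈ W, g x ∈ W) :
    W = ⊥ ∨ W = V1 ∨ W = V2 ∨ W = ⊤ :=
  invariant_subspaces_of_product_symplectic_group_general ω hAlt V1 V2 hcompl horth hNd1 hNd2 W hW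
end

section
/- Let η be an alternating 2p-multilinear form on V (with p ≥ 1) that is invariant under the symplectic group of ω, i.e. η(g v_1, …, g v_{2p}) = η(v_1, …, v_{2p}) for every linear automorphism g of V with ω(g x, g y) = ω(x, y) for all x, y ∈ V and all v_1, …, v_{2p} ∈ V. Then η is a rational scalar multiple of the p-fold wedge power ω ∧ ω ∧ ⋯ ∧ ω (p factors) of the 2-form ω. -/
/-!
Take a symplectic basis `(eₖ, fₖ)` of `V`. An alternating form is determined by its values
on tuples of distinct basis vectors. The map scaling `eₖ` by `2` and `fₖ` by `1/2` is
symplectic, so an invariant form vanishes on every tuple containing exactly one of `eₖ`, `fₖ`.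
The remaining tuples consist, up to order, of `p` complete pairs, and permuting the pairs is
symplectic; so an invariant form is determined by its value on `e₁, f₁, …, e_p, f_p`, and the
invariant forms span at most a line. The wedge power is invariant and nonzero there: its
nonzero terms come from the permutations preserving the pairing, and each equals `1`. If
`p > g`, there are no nonzero alternating `2p`-forms at all.
-/

open Module Function Set Equiv
open LinearMap (BilinForm)

section Combinatorics

theorem Function.Injective.exists_perm_eq_comp_of_range_eq {α β : Type*} {f g : α → β}
    (hf : Injective f) (hg : Injective g) (h : range f = range g) :
    ∃ π : Perm α, f = g ∘ π :=
  ⟨(Equiv.ofInjective f hf).trans ((Equiv.setCongr h).trans (Equiv.ofInjective g hg).symm),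
    funext fun x => by simp [Equiv.apply_ofInjective_symm]⟩

theorem Function.Injective.exists_perm_comp_eq {α ι : Type*} [Finite ι] {a a' : α → ι}
    (ha : Injective a) (ha' : Injective a') : ∃ e : Perm ι, e ∘ a = a' := by
  classical
  refine ⟨((Equiv.ofInjective a ha).symm.trans (Equiv.ofInjective a' ha')).extendSubtype,
    funext fun x => ?_⟩
  simp [Equiv.extendSubtype_apply_of_mem _ _ (mem_range_self x)]

theorem Equiv.Perm.exists_eq_prodCongrLeft_mul_prodCongrRight {ι β : Type*} [Finite ι]
    [Finite β] [Nonempty β] (τ : Perm (ι × β))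
    (hτ : ∀ i t t', (τ (i, t)).1 = (τ (i, t')).1) :
    ∃ (π : Perm ι) (e : ι → Perm β),
      τ = prodCongrLeft (fun _ => π) * prodCongrRight e := by
  have he : ∀ i, Bijective fun t => (τ (i, t)).2 := fun i =>
    Finite.injective_iff_bijective.mp fun t t' h =>
      congrArg Prod.snd (τ.injective (Prod.ext (hτ i t t') h))
  obtain ⟨t₀⟩ := ‹Nonempty β›
  have hπ : Bijective fun i => (τ (i, t₀)).1 :=
    Finite.injective_iff_bijective.mp fun i j h => by
      obtain ⟨t, ht⟩ := (he i).2 (τ (j, t₀)).2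
      exact congrArg Prod.fst (τ.injective (Prod.ext ((hτ i t t₀).trans h) ht))
  refine ⟨ofBijective _ hπ, fun i => ofBijective _ (he i), Perm.ext fun ⟨i, t⟩ => ?_⟩
  exact Prod.ext (hτ i t t₀) rfl

def pairIndex (p : ℕ) : Fin p × Fin 2 ≃ Fin (2 * p) :=
  finProdFinEquiv.trans (finCongr (Nat.mul_comm p 2))

@[simp] theorem pairIndex_apply_val {p : ℕ} (x : Fin p × Fin 2) :
    (pairIndex p x : ℕ) = 2 * x.1 + x.2 := by
  simp [pairIndex]; ring

theorem pairIndex_mk_zero {p : ℕ} (i : Fin p) :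
    pairIndex p (i, 0) = ⟨2 * (i : ℕ), by have := i.isLt; omega⟩ :=
  Fin.ext (by simp)

theorem pairIndex_mk_one {p : ℕ} (i : Fin p) :
    pairIndex p (i, 1) = ⟨2 * (i : ℕ) + 1, by have := i.isLt; omega⟩ :=
  Fin.ext (by simp)

def pairTuple {ι : Type*} {p : ℕ} (a : Fin p → ι) : Fin (2 * p) → ι × Fin 2 :=
  Prod.map a id ∘ (pairIndex p).symm

@[simp] theorem pairTuple_pairIndex {ι : Type*} {p : ℕ} (a : Fin p → ι) (x : Fin p × Fin 2) :
    pairTuple a (pairIndex p x) = (a x.1, x.2) := by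
  simp [pairTuple, Prod.map]

theorem Function.Injective.pairTuple {ι : Type*} {p : ℕ} {a : Fin p → ι} (ha : Injective a) :
    Injective (pairTuple a) :=
  (ha.prodMap injective_id).comp (pairIndex p).symm.injective

theorem range_pairTuple {ι : Type*} {p : ℕ} (a : Fin p → ι) :
    range (pairTuple a) = range a ×ˢ univ := by
  simp [pairTuple, EquivLike.range_comp, range_prodMap]

theorem exists_pairTuple_comp_perm {ι : Type*} {p : ℕ} {s : Fin (2 * p) → ι × Fin 2}
    (hs : Injective s) (hpair : ∀ j, ∃ j', j' ≠ j ∧ (s j').1 = (s j).1) :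
    ∃ a : Fin p → ι, Injective a ∧ ∃ π : Perm (Fin (2 * p)), s = pairTuple a ∘ π := by
  classical
  set A := Finset.univ.image fun j => (s j).1 with hA
  have hrange : range s = (A : Set ι) ×ˢ univ := by
    ext ⟨k, t⟩
    simp only [hA, mem_prod, Finset.mem_coe, Finset.mem_image, Finset.mem_univ, true_and,
      mem_univ, and_true, mem_range]
    constructor
    · rintro ⟨j, hj⟩
      exact ⟨j, by rw [hj]⟩
    · rintro ⟨j, rfl⟩
      obtain ⟨j', hne, hfst⟩ := hpair j
      have h2 : (s j').2 ≠ (s j).2 := fun h => hne (hs (Prod.ext hfst h))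
      by_cases ht : t = (s j).2
      · exact ⟨j, Prod.ext rfl ht.symm⟩
      · exact ⟨j', Prod.ext hfst (show (s j').2 = t by omega)⟩
  have hcard : Fintype.card (Fin p) = A.card := by
    have himage : Finset.univ.image s = A ×ˢ Finset.univ :=
      Finset.coe_injective (by simpa using hrange)
    have := congrArg Finset.card himage
    rw [Finset.card_image_of_injective _ hs, Finset.card_product] at this
    simp only [Finset.card_univ, Fintype.card_fin] at this ⊢
    omega
  obtain ⟨a, ha⟩ := Embedding.exists_of_card_eq_finset hcard
  refine ⟨a, a.injective, hs.exists_perm_eq_comp_of_range_eq a.injective.pairTuple ?_⟩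
  rw [hrange, range_pairTuple, ← ha]
  simp

end Combinatorics

section SymplecticPairing

variable {K ι : Type*} [Field K] [DecidableEq ι]

def symplecticPairing (x y : ι × Fin 2) : K :=
  if x.1 = y.1 then !![0, 1; -1, 0] x.2 y.2 else 0

theorem symplecticPairing_map_fst {κ : Type*} [DecidableEq κ] {a : κ → ι} (ha : Injective a)
    (x y : κ × Fin 2) :
    symplecticPairing (K := K) (a x.1, x.2) (a y.1, y.2) = symplecticPairing x y := by
  simp [symplecticPairing, ha.eq_iff]

theorem symplecticPairing_perm_fin_two (k : ι) (e : Perm (Fin 2)) :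
    symplecticPairing (k, e 0) (k, e 1) = ((Perm.sign e : ℤ) : K) := by
  rcases (by decide : ∀ e : Perm (Fin 2), e = 1 ∨ e = swap 0 1) e with rfl | rfl <;>
    simp [symplecticPairing]

variable [Fintype ι]

theorem sign_mul_prod_symplecticPairing_eq_zero_or_one (τ : Perm (ι × Fin 2)) :
    ((Perm.sign τ : ℤ) : K) * ∏ i, symplecticPairing (τ (i, 0)) (τ (i, 1)) = 0 ∨
      ((Perm.sign τ : ℤ) : K) * ∏ i, symplecticPairing (τ (i, 0)) (τ (i, 1)) = 1 := by
  by_cases hτ : ∀ i, (τ (i, 0)).1 = (τ (i, 1)).1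
  -- `τ` permutes the pairs and swaps inside some of them; each swap changes the sign of `τ`
  -- and of the corresponding factor.
  · right
    obtain ⟨π, e, rfl⟩ := τ.exists_eq_prodCongrLeft_mul_prodCongrRight fun i t t' => by
      fin_cases t <;> fin_cases t' <;> simp [hτ i]
    have hsign : Perm.sign (prodCongrLeft fun _ : Fin 2 => π) = 1 := by
      simp [Perm.sign_prodCongrLeft]
    simp only [Perm.mul_apply, prodCongrRight_apply, prodCongrLeft_apply,
      symplecticPairing_perm_fin_two, map_mul, hsign, Perm.sign_prodCongrRight, one_mul,
      Units.coe_prod, Int.cast_prod, ← Finset.prod_mul_distrib, ← Int.cast_mul,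
      ← Units.val_mul, Int.units_mul_self, Units.val_one, Int.cast_one, Finset.prod_const_one]
  · left
    obtain ⟨i, hi⟩ := not_forall.mp hτ
    have : ∏ i, symplecticPairing (K := K) (τ (i, 0)) (τ (i, 1)) = 0 :=
      Finset.prod_eq_zero (Finset.mem_univ i) (if_neg hi)
    rw [this, mul_zero]

theorem sum_sign_mul_prod_symplecticPairing_ne_zero [CharZero K] :
    ∑ τ : Perm (ι × Fin 2), ((Perm.sign τ : ℤ) : K) *
      ∏ i, symplecticPairing (τ (i, 0)) (τ (i, 1)) ≠ 0 := by
  classical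
  set term := fun τ : Perm (ι × Fin 2) => ((Perm.sign τ : ℤ) : K) *
      ∏ i, symplecticPairing (τ (i, 0)) (τ (i, 1))
  have hsum : ∑ τ, term τ = (Finset.univ.filter fun τ => term τ = 1).card := by
    rw [Finset.natCast_card_filter]
    refine Finset.sum_congr rfl fun τ _ => ?_
    rcases sign_mul_prod_symplecticPairing_eq_zero_or_one (K := K) τ with h | h <;>
      simp [term, h]
  have hone : term 1 = 1 := by simp [term, symplecticPairing]
  rw [hsum, Nat.cast_ne_zero, Finset.card_ne_zero]
  exact ⟨1, by simpa using hone⟩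

end SymplecticPairing

namespace LinearMap.BilinForm

variable {K V : Type*} [Field K] [AddCommGroup V] [Module K V] {ω : BilinForm K V}

section SymplecticBasis

variable {ι : Type*} [DecidableEq ι]

def IsSymplecticFamily (ω : BilinForm K V) (v : ι × Fin 2 → V) : Prop :=
  ∀ x y, ω (v x) (v y) = symplecticPairing x y

theorem IsSymplecticFamily.linearIndependent [Fintype ι] {v : ι × Fin 2 → V}
    (hv : ω.IsSymplecticFamily v) : LinearIndependent K v := by
  refine Fintype.linearIndependent_iff.mpr fun c hc ⟨k, t⟩ => ?_
  have h0 := congrArg (fun w => ω w (v (k, 1))) hc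
  have h1 := congrArg (fun w => ω (v (k, 0)) w) hc
  simp [map_sum, hv _ _, symplecticPairing, Fintype.sum_prod_type, Fin.sum_univ_two] at h0 h1
  fin_cases t <;> simpa using (by assumption)

theorem IsAlt.linearIndependent_pair (hAlt : ω.IsAlt) {x y : V} (hxy : ω x y = 1) :
    LinearIndependent K ![x, y] := by
  refine LinearIndependent.pair_iff.mpr fun s t hst => ?_
  have hyx : ω y x = -1 := by rw [← hAlt.neg_eq, hxy]
  have hx := congrArg (ω x) hst
  have hy := congrArg (ω y) hst
  simp [hAlt x, hAlt y, hxy, hyx] at hx hy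
  exact ⟨hy, hx⟩

theorem IsAlt.nondegenerate_restrict_span_pair (hAlt : ω.IsAlt) {x y : V} (hxy : ω x y = 1) :
    (ω.restrict (Submodule.span K {x, y})).Nondegenerate := by
  have hyx : ω y x = -1 := by rw [← hAlt.neg_eq, hxy]
  refine (IsRefl.nondegenerate_iff_separatingLeft (B := ω.restrict _)
    fun a b => hAlt.isRefl a b).mpr fun w hw => ?_
  obtain ⟨s, t, hst⟩ := Submodule.mem_span_pair.mp w.2
  have hx := hw ⟨x, Submodule.subset_span (by simp)⟩
  have hy := hw ⟨y, Submodule.subset_span (by simp)⟩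
  simp only [restrict_apply, domRestrict_apply, ← hst] at hx hy
  simp [hAlt x, hAlt y, hxy, hyx] at hx hy
  ext
  simp [← hst, hx, hy]

theorem IsAlt.exists_apply_eq_one_and_orthogonal [FiniteDimensional K V] (hAlt : ω.IsAlt)
    (hNd : ω.Nondegenerate) {n : ℕ} (hdim : finrank K V = 2 * (n + 1)) :
    ∃ x y : V, ω x y = 1 ∧
      (ω.restrict (ω.orthogonal (Submodule.span K {x, y}))).Nondegenerate ∧
      finrank K (ω.orthogonal (Submodule.span K {x, y})) = 2 * n := by
  have : Nontrivial V := Module.nontrivial_of_finrank_pos (R := K) (by omega)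
  obtain ⟨x, hx⟩ := exists_ne (0 : V)
  obtain ⟨y₀, hy₀⟩ : ∃ y, ω x y ≠ 0 := by
    by_contra! h
    exact hx (hNd.1 x h)
  obtain ⟨y, hxy⟩ : ∃ y, ω x y = 1 := ⟨(ω x y₀)⁻¹ • y₀, by simp [hy₀]⟩
  have hcompl := isCompl_orthogonal_of_restrict_nondegenerate hAlt.isRefl
    (hAlt.nondegenerate_restrict_span_pair hxy)
  refine ⟨x, y, hxy, ?_, ?_⟩
  · refine nondegenerate_restrict_of_disjoint_orthogonal ω hAlt.isRefl ?_
    rw [orthogonal_orthogonal hNd hAlt.isRefl]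
    exact hcompl.symm.disjoint
  · have hspan : finrank K (Submodule.span K {x, y}) = 2 := by
      have := finrank_span_eq_card (hAlt.linearIndependent_pair hxy)
      rwa [Matrix.range_cons_cons_empty, Fintype.card_fin] at this
    have := Submodule.finrank_add_eq_of_isCompl hcompl
    omega

theorem IsAlt.exists_isSymplecticFamily [FiniteDimensional K V] (hAlt : ω.IsAlt)
    (hNd : ω.Nondegenerate) {g : ℕ} (hdim : finrank K V = 2 * g) :
    ∃ v : Fin g × Fin 2 → V, ω.IsSymplecticFamily v := by
  induction g generalizing V with
  | zero => exact ⟨fun i => i.1.elim0, fun i => i.1.elim0⟩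
  | succ n ih =>
    obtain ⟨x, y, hxy, hNd', hdim'⟩ := hAlt.exists_apply_eq_one_and_orthogonal hNd hdim
    obtain ⟨v, hv⟩ := ih (ω := ω.restrict _) (fun w => hAlt w) hNd' hdim'
    have hyx : ω y x = -1 := by rw [← hAlt.neg_eq, hxy]
    have horth : ∀ s k, ω (![x, y] s) (v k) = 0 ∧ ω (v k) (![x, y] s) = 0 := fun s k =>
      have h := (mem_orthogonal_iff.mp (v k).2) _
        (Submodule.subset_span (by fin_cases s <;> simp))
      ⟨h, hAlt.isRefl _ _ h⟩
    refine ⟨fun i => Fin.cases (![x, y] i.2) (fun k => (v (k, i.2) : V)) i.1, ?_⟩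
    rintro ⟨k, s⟩ ⟨l, t⟩
    cases k using Fin.cases <;> cases l using Fin.cases
    · fin_cases s <;> fin_cases t <;> simp [symplecticPairing, hAlt x, hAlt y, hxy, hyx]
    · simp [symplecticPairing, (horth _ _).1, (Fin.succ_ne_zero _).symm]
    · simp [symplecticPairing, (horth _ _).2, Fin.succ_ne_zero]
    · simpa [symplecticPairing] using hv _ _

theorem IsAlt.exists_symplecticBasis [FiniteDimensional K V] (hAlt : ω.IsAlt)
    (hNd : ω.Nondegenerate) {g : ℕ} (hdim : finrank K V = 2 * g) :
    ∃ b : Basis (Fin g × Fin 2) K V, ω.IsSymplecticFamily b := by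
  obtain ⟨v, hv⟩ := hAlt.exists_isSymplecticFamily hNd hdim
  refine ⟨basisOfLinearIndependentOfCardEqFinrank' v hv.linearIndependent
    (by simp [hdim, mul_comm]), ?_⟩
  simpa using hv

end SymplecticBasis

def toMultilinearMap (ω : BilinForm K V) : MultilinearMap K (fun _ : Fin 2 => V) K :=
  MultilinearMap.mk' (fun v => ω (v 0) (v 1))
    (fun v i x y => by fin_cases i <;> simp)
    (fun v i c x => by fin_cases i <;> simp)

/-- `ω ∧ ⋯ ∧ ω` (`p` factors), up to the constant fixed by a convention for the wedge
product. -/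
def wedgePow (ω : BilinForm K V) (p : ℕ) : AlternatingMap K V K (Fin (2 * p)) :=
  MultilinearMap.alternatization <|
    ((MultilinearMap.mkPiAlgebra K (Fin p) K).compMultilinearMap
      fun _ => ω.toMultilinearMap).domDomCongr ((Equiv.sigmaEquivProd _ _).trans (pairIndex p))

theorem wedgePow_apply (ω : BilinForm K V) (p : ℕ) (v : Fin (2 * p) → V) :
    ω.wedgePow p v = ∑ σ : Perm (Fin (2 * p)), ((Perm.sign σ : ℤ) : K) *
      ∏ i : Fin p, ω (v (σ (pairIndex p (i, 0)))) (v (σ (pairIndex p (i, 1)))) := by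
  simp [wedgePow, MultilinearMap.alternatization_apply, toMultilinearMap, Units.smul_def,
    Sigma.curry]

theorem IsSymplecticFamily.wedgePow_apply_pairTuple_ne_zero [CharZero K] {ι : Type*}
    [DecidableEq ι] {v : ι × Fin 2 → V} (hv : ω.IsSymplecticFamily v) {p : ℕ}
    {a : Fin p → ι} (ha : Injective a) : ω.wedgePow p (v ∘ pairTuple a) ≠ 0 := by
  rw [wedgePow_apply, ← Fintype.sum_equiv (pairIndex p).permCongr _ _ fun _ => rfl]
  convert sum_sign_mul_prod_symplecticPairing_ne_zero (K := K) (ι := Fin p) using 3 with τ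
  · simp [Perm.sign_permCongr]
  · simp [Equiv.permCongr_apply, hv _ _, symplecticPairing_map_fst ha]

variable (ω) in
def symplecticInvariants (κ : Type*) : Submodule K (AlternatingMap K V K κ) where
  carrier := {θ | ∀ T : V ≃ₗ[K] V, (∀ x y, ω (T x) (T y) = ω x y) →
    ∀ v : κ → V, θ (fun i => T (v i)) = θ v}
  add_mem' hθ hθ' T hT v := by simp [hθ T hT v, hθ' T hT v]
  zero_mem' _ _ _ := rfl
  smul_mem' c θ hθ T hT v := by simp [hθ T hT v]

theorem wedgePow_mem_symplecticInvariants (p : ℕ) :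
    ω.wedgePow p ∈ ω.symplecticInvariants (Fin (2 * p)) := fun T hT v => by
  simp [wedgePow_apply, hT]

theorem apply_apply_eq_of_basis {ι : Type*} (b : Basis ι K V) {T : V ≃ₗ[K] V}
    (h : ∀ i j, ω (T (b i)) (T (b j)) = ω (b i) (b j)) (x y : V) : ω (T x) (T y) = ω x y :=
  LinearMap.congr_fun₂ (ext_basis b (B := ω.compl₁₂ T.toLinearMap T.toLinearMap) h) x y

section Invariants

variable {ι κ : Type*} [DecidableEq ι] {b : Basis (ι × Fin 2) K V}
  {θ : AlternatingMap K V K κ}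

theorem IsSymplecticFamily.apply_prodMap_eq (hb : ω.IsSymplecticFamily b)
    (hθ : θ ∈ ω.symplecticInvariants κ) (e : Perm ι) (s : κ → ι × Fin 2) :
    θ (fun j => b (e (s j).1, (s j).2)) = θ (fun j => b (s j)) := by
  set T := b.equiv b (e.prodCongr (Equiv.refl _))
  have hTb : ∀ x, T (b x) = b (e x.1, x.2) := fun x => b.equiv_apply x _ _
  have hT := apply_apply_eq_of_basis (ω := ω) b (T := T) fun x y => by
    rw [hTb, hTb, hb, hb, symplecticPairing_map_fst e.injective]
  simpa [hTb] using hθ T hT (fun j => b (s j))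

theorem IsSymplecticFamily.apply_eq_zero_of_forall_fst_ne [CharZero K] [Fintype κ]
    (hb : ω.IsSymplecticFamily b) (hθ : θ ∈ ω.symplecticInvariants κ)
    {s : κ → ι × Fin 2} {j₀ : κ} (hj₀ : ∀ j ≠ j₀, (s j).1 ≠ (s j₀).1) :
    θ (fun j => b (s j)) = 0 := by
  -- `T` scales the `k`-th hyperbolic pair by `2` and `1/2`: it is symplectic, and it
  -- multiplies the value by `2` or `1/2`, according to which vector of the pair occurs.
  set k := (s j₀).1
  set c : Kˣ := Units.mk0 2 two_ne_zero
  set u : ι × Fin 2 → Kˣ := fun x => if x.1 = k then (if x.2 = 0 then c else c⁻¹) else 1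
  set T := b.equiv (b.unitsSMul u) (Equiv.refl _)
  have hTb : ∀ x, T (b x) = (u x : K) • b x := fun x => by
    simp [T, Basis.unitsSMul_apply, Units.smul_def]
  have hT := apply_apply_eq_of_basis (ω := ω) b (T := T) fun ⟨l, t⟩ ⟨l', t'⟩ => by
    rw [hTb, hTb]
    by_cases hl : l = l'
    · subst hl
      fin_cases t <;> fin_cases t' <;> by_cases hlk : l = k <;>
        simp [hb _ _, symplecticPairing, u, hlk]
    · simp [hb _ _, symplecticPairing, hl]
  have hprod : ∏ j, (u (s j) : K) = u (s j₀) :=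
    Finset.prod_eq_single j₀ (fun j _ hj => by simp [u, k, hj₀ j hj]) (by simp)
  have hu : (u (s j₀) : K) ≠ 1 := by
    by_cases h0 : (s j₀).2 = 0 <;> simp [u, k, c, h0]
  have := hθ T hT (fun j => b (s j))
  simp only [hTb, AlternatingMap.map_smul_univ, hprod, smul_eq_mul] at this
  exact (mul_left_eq_self₀.mp this).resolve_left hu

theorem IsSymplecticFamily.eq_zero_of_apply_pairTuple_eq_zero [CharZero K] [Finite ι]
    {p : ℕ} (hb : ω.IsSymplecticFamily b) {θ : AlternatingMap K V K (Fin (2 * p))}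
    (hθ : θ ∈ ω.symplecticInvariants (Fin (2 * p))) {a : Fin p → ι} (ha : Injective a)
    (h0 : θ (b ∘ pairTuple a) = 0) : θ = 0 := by
  refine b.ext_alternating fun s hs => ?_
  rw [AlternatingMap.zero_apply]
  by_cases hpair : ∀ j, ∃ j', j' ≠ j ∧ (s j').1 = (s j).1
  · obtain ⟨a', ha', π, rfl⟩ := exists_pairTuple_comp_perm hs hpair
    obtain ⟨e, rfl⟩ := ha.exists_perm_comp_eq ha'
    have h1 : θ (b ∘ pairTuple (e ∘ a)) = 0 :=
      (hb.apply_prodMap_eq hθ e (pairTuple a)).trans h0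
    exact (θ.map_perm (b ∘ pairTuple (e ∘ a)) π).trans (by rw [h1, smul_zero])
  · push Not at hpair
    obtain ⟨j₀, hj₀⟩ := hpair
    exact hb.apply_eq_zero_of_forall_fst_ne hθ hj₀

end Invariants

end LinearMap.BilinForm

theorem symplectic_invariant_alternating_form_is_multiple_of_wedge_power_of_omega
    {V : Type*} [AddCommGroup V] [Module ℚ V] [FiniteDimensional ℚ V]
    (g : ℕ) (hdim : Module.finrank ℚ V = 2 * g)
    (ω : LinearMap.BilinForm ℚ V) (hAlt : ω.IsAlt) (hNd : ω.Nondegenerate)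
    (p : ℕ)
    (η : AlternatingMap ℚ V ℚ (Fin (2 * p)))
    (hinv : ∀ T : V ≃ₗ[ℚ] V, (∀ x y, ω (T x) (T y) = ω x y) →
      ∀ v : Fin (2 * p) → V, η (fun i => T (v i)) = η v) :
    ∃ c : ℚ, ∀ v : Fin (2 * p) → V,
      η v = c * ∑ σ : Equiv.Perm (Fin (2 * p)),
        ((Equiv.Perm.sign σ : ℤ) : ℚ) *
          ∏ i : Fin p,
            ω (v (σ ⟨2 * (i : ℕ), by have := i.isLt; omega⟩))
              (v (σ ⟨2 * (i : ℕ) + 1, by have := i.isLt; omega⟩)) := by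
  suffices ∃ c : ℚ, η = c • ω.wedgePow p by
    obtain ⟨c, rfl⟩ := this
    exact ⟨c, fun v => by simp [BilinForm.wedgePow_apply, pairIndex_mk_zero, pairIndex_mk_one]⟩
  obtain ⟨b, hb⟩ := hAlt.exists_symplecticBasis hNd hdim
  rcases le_or_gt p g with hpg | hgp
  · have ha := Fin.castLE_injective hpg
    set w := b ∘ pairTuple (Fin.castLE hpg)
    refine ⟨η w / ω.wedgePow p w, sub_eq_zero.mp (hb.eq_zero_of_apply_pairTuple_eq_zero
      (sub_mem hinv (Submodule.smul_mem _ _ (BilinForm.wedgePow_mem_symplecticInvariants p)))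
      ha ?_)⟩
    simp [w, div_mul_cancel₀ _ (hb.wedgePow_apply_pairTuple_ne_zero ha)]
  · refine ⟨0, ?_⟩
    ext v
    rw [zero_smul, AlternatingMap.zero_apply]
    refine η.map_linearDependent v fun h => ?_
    have := h.fintype_card_le_finrank
    simp only [Fintype.card_fin, hdim] at this
    omega
end
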